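/- Let X, Y be real symmetric n×n matrices with X positive definite. Then the matrix M_{XY} = [[X² + Y², Y],[Y, I]] admits the factorization M_{XY} = Sᵀ D_X S, where D_X = [[X, 0],[0, X]] and S = [[X^{1/2}, 0],[X^{−1/2} Y, X^{−1/2}]] is a symplectic matrix (X^{1/2} denoting the positive square root of X). -/

import Mathlib

open Matrix

section
open scoped ComplexOrder
/-- The positive semidefinite square root of a positive semidefinite matrix, as defined in
Mathlib (Dec 2024) under the name `Matrix.PosSemidef.sqrt`, since removed. -/
noncomputable def Matrix.PosSemidef.sqrt {𝕜 : Type*} [RCLike 𝕜] {m : Type*} [Fintype m]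
    [DecidableEq m] {A : Matrix m m 𝕜} (hA : A.PosSemidef) : Matrix m m 𝕜 :=
  hA.1.eigenvectorUnitary.1 * diagonal ((↑) ∘ (Real.sqrt ∘ hA.1.eigenvalues)) *
  (star hA.1.eigenvectorUnitary : Matrix m m 𝕜)
end

/-- The standard symplectic matrix `J = [[0, I],[−I, 0]]`. -/
def stdJ (n : ℕ) : Matrix (Fin n ⊕ Fin n) (Fin n ⊕ Fin n) ℝ :=
  fromBlocks 0 1 (-1) 0

/-- A real `2n×2n` matrix is symplectic if `Sᵀ J S = J`. -/
def IsSymplecticMat {n : ℕ} (S : Matrix (Fin n ⊕ Fin n) (Fin n ⊕ Fin n) ℝ) : Prop :=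
  Sᵀ * stdJ n * S = stdJ n

namespace Matrix.PosSemidef

open scoped ComplexOrder

variable {𝕜 : Type*} [RCLike 𝕜] {m : Type*} [Fintype m] [DecidableEq m] {A : Matrix m m 𝕜}

theorem sqrt_mul_self (hA : A.PosSemidef) : hA.sqrt * hA.sqrt = A := by
  set U : Matrix m m 𝕜 := hA.1.eigenvectorUnitary.1
  set D : Matrix m m 𝕜 := diagonal ((↑) ∘ (Real.sqrt ∘ hA.1.eigenvalues))
  have hUU : (star hA.1.eigenvectorUnitary : Matrix m m 𝕜) * U = 1 :=
    Unitary.coe_star_mul_self _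
  have hDD : D * D = diagonal (RCLike.ofReal ∘ hA.1.eigenvalues) := by
    rw [diagonal_mul_diagonal]
    congr 1 with i
    simp only [Function.comp_apply, ← RCLike.ofReal_mul,
      Real.mul_self_sqrt (hA.eigenvalues_nonneg i)]
  calc hA.sqrt * hA.sqrt = U * (D * ((star hA.1.eigenvectorUnitary : Matrix m m 𝕜) * U) * D) *
        (star hA.1.eigenvectorUnitary : Matrix m m 𝕜) := by
        simp only [PosSemidef.sqrt, U, D, Matrix.mul_assoc]
    _ = A := by
      rw [hUU, Matrix.mul_one, hDD]
      conv_rhs => rw [hA.1.spectral_theorem]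
      rw [Unitary.conjStarAlgAut_apply]

theorem isHermitian_sqrt (hA : A.PosSemidef) : hA.sqrt.IsHermitian := by
  refine isHermitian_mul_mul_conjTranspose _ (isHermitian_diagonal_of_self_adjoint _ ?_)
  funext i
  simp [RCLike.conj_ofReal]

end Matrix.PosSemidef

-- For `S = [[A, 0], [C, D]]` one has `Sᵀ J S = [[Aᵀ C - Cᵀ A, Aᵀ D], [-Dᵀ A, 0]]`.
theorem isSymplecticMat_fromBlocks_zero₁₂ {n : ℕ} {A C D : Matrix (Fin n) (Fin n) ℝ}
    (hAD : Aᵀ * D = 1) (hAC : Aᵀ * C = Cᵀ * A) : IsSymplecticMat (fromBlocks A 0 C D) := by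
  have hDA : Dᵀ * A = 1 := by simpa [transpose_mul] using congrArg transpose hAD
  simp only [IsSymplecticMat, stdJ, fromBlocks_transpose, fromBlocks_multiply]
  congr 1 <;> simp [hAD, hDA, hAC]

theorem isSymplecticMat_fromBlocks_inv_mul {n : ℕ} {R Y : Matrix (Fin n) (Fin n) ℝ}
    (hR : R.IsSymm) (hRdet : IsUnit R.det) (hY : Y.IsSymm) :
    IsSymplecticMat (fromBlocks R 0 (R⁻¹ * Y) R⁻¹) := by
  refine isSymplecticMat_fromBlocks_zero₁₂ ?_ ?_
  · rw [hR.eq, mul_nonsing_inv R hRdet]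
  · rw [hR.eq, transpose_mul, hY.eq, transpose_nonsing_inv, hR.eq, Matrix.mul_assoc,
      nonsing_inv_mul R hRdet, Matrix.mul_one, mul_nonsing_inv_cancel_left _ _ hRdet]

theorem fromBlocks_mul_self_add_mul_self_eq_transpose_mul_mul {m α : Type*} [Fintype m]
    [DecidableEq m] [CommRing α] {R X Y : Matrix m m α} (hR : R.IsSymm) (hRdet : IsUnit R.det)
    (hRX : R * R = X) (hY : Y.IsSymm) :
    fromBlocks (X * X + Y * Y) Y Y 1 =
      (fromBlocks R 0 (R⁻¹ * Y) R⁻¹)ᵀ * fromBlocks X 0 0 X *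
        fromBlocks R 0 (R⁻¹ * Y) R⁻¹ := by
  subst hRX
  have hRinv : R⁻¹ᵀ = R⁻¹ := by rw [transpose_nonsing_inv, hR.eq]
  simp only [fromBlocks_transpose, fromBlocks_multiply, transpose_mul, transpose_zero, hR.eq,
    hY.eq, hRinv, Matrix.mul_zero, Matrix.zero_mul, add_zero, zero_add]
  congr 1 <;> simp [Matrix.mul_assoc, nonsing_inv_mul_cancel_left _ _ hRdet,
    mul_nonsing_inv_cancel_left _ _ hRdet, mul_nonsing_inv _ hRdet]

theorem fermi_matrix_factorization_general
    (n : ℕ) (X Y : Matrix (Fin n) (Fin n) ℝ)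
    (hY : Y.IsSymm) (hXpd : X.PosDef) :
    IsSymplecticMat
        (fromBlocks hXpd.posSemidef.sqrt 0
          (hXpd.posSemidef.sqrt⁻¹ * Y) hXpd.posSemidef.sqrt⁻¹) ∧
      fromBlocks (X * X + Y * Y) Y Y 1 =
        (fromBlocks hXpd.posSemidef.sqrt 0
            (hXpd.posSemidef.sqrt⁻¹ * Y) hXpd.posSemidef.sqrt⁻¹)ᵀ *
          fromBlocks X 0 0 X *
          (fromBlocks hXpd.posSemidef.sqrt 0
            (hXpd.posSemidef.sqrt⁻¹ * Y) hXpd.posSemidef.sqrt⁻¹) := by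
  set R := hXpd.posSemidef.sqrt
  have hRX : R * R = X := PosSemidef.sqrt_mul_self _
  have hR : R.IsSymm := isHermitian_iff_isSymm.mp (PosSemidef.isHermitian_sqrt _)
  have hRdet : IsUnit R.det := by
    refine isUnit_of_mul_isUnit_left (y := R.det) ?_
    rw [← det_mul, hRX, ← isUnit_iff_isUnit_det]
    exact hXpd.isUnit
  exact ⟨isSymplecticMat_fromBlocks_inv_mul hR hRdet hY,
    fromBlocks_mul_self_add_mul_self_eq_transpose_mul_mul hR hRdet hRX hY⟩

/-- The Fermi matrix `M_{XY} = [[X² + Y², Y],[Y, I]]` factorizes as `Sᵀ D_X S` with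
`D_X = [[X, 0],[0, X]]` and the symplectic matrix `S = [[X^{1/2}, 0],[X^{−1/2}Y, X^{−1/2}]]`. -/
theorem fermi_matrix_factorization
    (n : ℕ) (hn : 1 ≤ n) (X Y : Matrix (Fin n) (Fin n) ℝ)
    (hX : X.IsSymm) (hY : Y.IsSymm) (hXpd : X.PosDef) :
    IsSymplecticMat
        (fromBlocks hXpd.posSemidef.sqrt 0
          (hXpd.posSemidef.sqrt⁻¹ * Y) hXpd.posSemidef.sqrt⁻¹) ∧
      fromBlocks (X * X + Y * Y) Y Y 1 =
        (fromBlocks hXpd.posSemidef.sqrt 0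
            (hXpd.posSemidef.sqrt⁻¹ * Y) hXpd.posSemidef.sqrt⁻¹)ᵀ *
          fromBlocks X 0 0 X *
          (fromBlocks hXpd.posSemidef.sqrt 0
            (hXpd.posSemidef.sqrt⁻¹ * Y) hXpd.posSemidef.sqrt⁻¹) :=
  fermi_matrix_factorization_general n X Y hY hXpd
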